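/- Fix an integer n ≥ 1 and a sign δ ∈ {+1,−1}, and define ν₋(λ,ξ) = √(q_δ^−(λ,ξ)/(a(λ,ξ) − n/2)) on the open region Ω = {(λ,ξ) ∈ ℝ² : λ ≠ 0, ξ > (n+1)·|λ|} (note that a > n/2 on Ω). Then for every integer j ≥ 0 and every i ∈ {0,1} there exists a constant C > 0 such that |∂_λ^i ∂_ξ^j ν₋(λ,ξ)| ≤ C·|λ|^{−i}·ξ^{−j} for all (λ,ξ) ∈ Ω. -/

import Mathlib

/-- `a(λ,ξ) = √(ξ + λ² + n²/4)`. -/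
noncomputable def aFn (n : ℕ) (lam ξ : ℝ) : ℝ :=
  Real.sqrt (ξ + lam ^ 2 + (n : ℝ) ^ 2 / 4)

/-- `ν₋(λ,ξ) = √(q_δ^−(λ,ξ)/(a(λ,ξ) − n/2))` where `q_δ^− = a − n/2 + δ·λ`. -/
noncomputable def nuMinus (n : ℕ) (δ : ℝ) (lam ξ : ℝ) : ℝ :=
  Real.sqrt ((aFn n lam ξ - (n : ℝ) / 2 + δ * lam) / (aFn n lam ξ - (n : ℝ) / 2))

/-- The mixed partial derivative `∂_λ^i ∂_ξ^j f(λ,ξ)`. -/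
noncomputable def mixedPartial (i j : ℕ) (f : ℝ → ℝ → ℝ) (lam ξ : ℝ) : ℝ :=
  iteratedDeriv i (fun l => iteratedDeriv j (fun t => f l t) ξ) lam

set_option linter.unusedVariables false

namespace Stmt12

structure Facts (n : ℕ) (δ l t a : ℝ) : Prop where
  ht : 0 < t
  ha : 0 < a
  hsq : a ^ 2 = t + l ^ 2 + (n : ℝ) ^ 2 / 4
  hna : (n : ℝ) / 2 ≤ a
  hD : |l| < a - n / 2
  hN : 0 < a - n / 2 + δ * l
  hD2 : t ≤ 2 * a * (a - n / 2)
  hN2 : t ≤ 3 * ((n : ℝ) + 1) * a * (a - n / 2 + δ * l)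
  hN3 : a - n / 2 + δ * l ≤ 2 * (a - n / 2)
  hta : t ≤ a ^ 2

theorem facts {n : ℕ} (hn : 1 ≤ n) {δ : ℝ} (hδ : δ = 1 ∨ δ = -1) {l t : ℝ}
    (hl : l ≠ 0) (hw : ((n : ℝ) + 1) * |l| < t) : Facts n δ l t (aFn n l t) := by
  have hn1 : (1 : ℝ) ≤ (n : ℝ) := by exact_mod_cast hn
  have habs : 0 < |l| := abs_pos.mpr hl
  have ht : 0 < t := lt_trans (by positivity) hw
  have hS : (0 : ℝ) < t + l ^ 2 + (n : ℝ) ^ 2 / 4 := by positivity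
  have hsq : aFn n l t ^ 2 = t + l ^ 2 + (n : ℝ) ^ 2 / 4 := Real.sq_sqrt hS.le
  have ha : 0 < aFn n l t := Real.sqrt_pos.mpr hS
  set a := aFn n l t with ha_def
  have hδl : |δ * l| = |l| := by rcases hδ with h | h <;> simp [h, abs_mul]
  have hδl1 : -|l| ≤ δ * l := by rw [← hδl]; exact neg_abs_le _
  have hδl2 : δ * l ≤ |l| := by rw [← hδl]; exact le_abs_self _
  have hna : (n : ℝ) / 2 ≤ a := by
    nlinarith [sq_abs l, abs_nonneg l]
  have hD : |l| < a - n / 2 := by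
    have h2 : (|l| + n / 2) ^ 2 < a ^ 2 := by nlinarith [sq_abs l]
    have := lt_of_pow_lt_pow_left₀ 2 ha.le h2
    linarith
  have hN : 0 < a - n / 2 + δ * l := by linarith
  have hla : |l| ≤ a := by linarith
  constructor
  · exact ht
  · exact ha
  · exact hsq
  · exact hna
  · exact hD
  · exact hN
  · nlinarith [sq_abs l]
  · have hδsq : δ * δ = 1 := by rcases hδ with h | h <;> rw [h] <;> norm_num
    have key : (a - n / 2 + δ * l) * (a + n / 2 - δ * l) = t + n * (δ * l) := by
      linear_combination hsq - l ^ 2 * hδsq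
    have h3a : (a - n / 2 + δ * l) * (a + n / 2 - δ * l) ≤ (a - n / 2 + δ * l) * (3 * a) := by
      apply mul_le_mul_of_nonneg_left _ hN.le
      linarith
    have hnt : (n : ℝ) * ((n + 1) * |l|) ≤ n * t := by
      apply mul_le_mul_of_nonneg_left hw.le (by positivity)
    nlinarith [key, h3a, hnt]
  · linarith
  · nlinarith [sq_abs l, abs_nonneg l]

theorem ML {n : ℕ} (hn : 1 ≤ n) {δ l t a : ℝ}
    (ht : 0 < t) (ha : 0 < a)
    (hna : (n : ℝ) / 2 ≤ a)
    (hD : |l| < a - n / 2)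
    (hN : 0 < a - n / 2 + δ * l)
    (hD2 : t ≤ 2 * a * (a - n / 2))
    (hN2 : t ≤ 3 * ((n : ℝ) + 1) * a * (a - n / 2 + δ * l))
    (hN3 : a - n / 2 + δ * l ≤ 2 * (a - n / 2))
    (hta : t ≤ a ^ 2)
    (PA PD PN : ℝ)
    (H1 : 0 ≤ -PA - PD - PN) (H2 : 0 ≤ -PA + PD + PN) (H3 : 0 ≤ -PA - PD + PN) :
    a ^ PA * (a - n / 2) ^ PD * (a - n / 2 + δ * l) ^ PN ≤
      Real.exp ((|PD| + |PN|) * Real.log (6 * ((n : ℝ) + 1))) * t ^ ((PA + PD + PN) / 2) := by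
  set D := a - n / 2 with hD_def
  set N := a - n / 2 + δ * l with hN_def
  have hDpos : 0 < D := lt_of_le_of_lt (abs_nonneg l) hD
  have hX : 0 < a ^ PA * D ^ PD * N ^ PN := by positivity
  have hK : 0 < Real.exp ((|PD| + |PN|) * Real.log (6 * ((n : ℝ) + 1))) * t ^ ((PA + PD + PN) / 2) := by
    positivity
  rw [← Real.log_le_log_iff hX hK]
  rw [Real.log_mul (by positivity) (by positivity), Real.log_mul (by positivity) (by positivity),
    Real.log_mul (by positivity) (by positivity), Real.log_exp, Real.log_rpow ha, Real.log_rpow hDpos, Real.log_rpow (by positivity : (0:ℝ) < N),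
    Real.log_rpow ht]
  set A := Real.log a
  set Dl := Real.log D
  set Nl := Real.log N
  set T := Real.log t
  set k6 := Real.log (6 * ((n : ℝ) + 1)) with hk6_def
  have hn1 : (1 : ℝ) ≤ (n : ℝ) := by exact_mod_cast hn
  have hk2 : Real.log 2 ≤ k6 := by
    apply Real.log_le_log (by norm_num); linarith
  have hk2' : (0:ℝ) ≤ Real.log 2 := Real.log_nonneg (by norm_num)
  have hk6 : 0 ≤ k6 := le_trans hk2' hk2
  have hk3 : Real.log (3 * ((n : ℝ) + 1)) ≤ k6 := by
    apply Real.log_le_log (by positivity); linarith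
  have hk3' : (0:ℝ) ≤ Real.log (3 * ((n : ℝ) + 1)) := Real.log_nonneg (by linarith)
  have hk22 : 2 * Real.log 2 ≤ k6 := by
    have : Real.log 2 + Real.log 2 = Real.log 4 := by
      rw [← Real.log_mul (by norm_num) (by norm_num)]; norm_num
    have h4 : Real.log 4 ≤ k6 := by apply Real.log_le_log (by norm_num); linarith
    linarith
  -- log facts (before clear_value)
  have f1 : Dl ≤ A := Real.log_le_log hDpos (by rw [hD_def]; linarith [hn1])
  have f2 : T ≤ Real.log 2 + A + Dl := by
    calc T ≤ Real.log (2 * a * D) := Real.log_le_log ht hD2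
    _ = Real.log 2 + A + Dl := by
        rw [Real.log_mul (by positivity) (ne_of_gt hDpos), Real.log_mul (by norm_num) (ne_of_gt ha)]
  have f3 : T ≤ Real.log (3 * ((n:ℝ) + 1)) + A + Nl := by
    calc T ≤ Real.log (3 * ((n:ℝ)+1) * a * N) := Real.log_le_log ht hN2
    _ = Real.log (3 * ((n:ℝ)+1)) + A + Nl := by
        rw [Real.log_mul (by positivity) (by positivity), Real.log_mul (by positivity) (ne_of_gt ha)]
  have f4 : Nl ≤ Real.log 2 + Dl := by
    calc Nl ≤ Real.log (2 * D) := Real.log_le_log (by positivity) hN3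
    _ = Real.log 2 + Dl := Real.log_mul (by norm_num) (ne_of_gt hDpos)
  have f5 : T ≤ 2 * A := by
    have := Real.log_le_log ht hta
    rwa [Real.log_pow, Nat.cast_ofNat] at this
  clear_value A Dl Nl T k6
  rcases le_or_gt PN 0 with hPN | hPN
  · rcases le_or_gt PD 0 with hPD | hPD
    · have h2 : PD * Dl ≤ PD * (T - Real.log 2 - A) :=
        mul_le_mul_of_nonpos_left (by linarith) hPD
      have h3 : PN * Nl ≤ PN * (T - Real.log (3 * ((n:ℝ)+1)) - A) :=
        mul_le_mul_of_nonpos_left (by linarith) hPN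
      have h5 : (PA - PD - PN) * A ≤ (PA - PD - PN) * (T / 2) :=
        mul_le_mul_of_nonpos_left (by linarith) (by linarith)
      have g2 : -PD * Real.log 2 ≤ -PD * k6 := mul_le_mul_of_nonneg_left hk2 (by linarith)
      have g3 : -PN * Real.log (3 * ((n:ℝ)+1)) ≤ -PN * k6 :=
        mul_le_mul_of_nonneg_left hk3 (by linarith)
      rw [abs_of_nonpos hPD, abs_of_nonpos hPN]
      linarith [h2, h3, h5, g2, g3]
    · have h1 : PD * Dl ≤ PD * A := mul_le_mul_of_nonneg_left f1 hPD.le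
      have h3 : PN * Nl ≤ PN * (T - Real.log (3 * ((n:ℝ)+1)) - A) :=
        mul_le_mul_of_nonpos_left (by linarith) hPN
      have h5 : (PA + PD - PN) * A ≤ (PA + PD - PN) * (T / 2) :=
        mul_le_mul_of_nonpos_left (by linarith) (by linarith)
      have g3 : -PN * Real.log (3 * ((n:ℝ)+1)) ≤ -PN * k6 :=
        mul_le_mul_of_nonneg_left hk3 (by linarith)
      have g4 : (0:ℝ) ≤ PD * k6 := mul_nonneg hPD.le hk6
      rw [abs_of_pos hPD, abs_of_nonpos hPN]
      linarith [h1, h3, h5, g3, g4]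
  · have h4 : PN * Nl ≤ PN * (Real.log 2 + Dl) := mul_le_mul_of_nonneg_left f4 hPN.le
    rcases le_or_gt (PD + PN) 0 with hPDN | hPDN
    · have h2 : (PD + PN) * Dl ≤ (PD + PN) * (T - Real.log 2 - A) :=
        mul_le_mul_of_nonpos_left (by linarith) hPDN
      have h5 : (PA - PD - PN) * A ≤ (PA - PD - PN) * (T / 2) :=
        mul_le_mul_of_nonpos_left (by linarith) (by linarith)
      have g2 : (-PD - PN) * Real.log 2 ≤ (-PD - PN) * k6 :=
        mul_le_mul_of_nonneg_left hk2 (by linarith)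
      have g2' : PN * Real.log 2 ≤ PN * k6 := mul_le_mul_of_nonneg_left hk2 hPN.le
      have g5 : (0:ℝ) ≤ PN * k6 := mul_nonneg hPN.le hk6
      rw [abs_of_nonpos (by linarith : PD ≤ 0), abs_of_pos hPN]
      linarith [h4, h2, h5, g2, g2', g5]
    · have h1 : (PD + PN) * Dl ≤ (PD + PN) * A := mul_le_mul_of_nonneg_left f1 hPDN.le
      have h5 : (PA + PD + PN) * A ≤ (PA + PD + PN) * (T / 2) :=
        mul_le_mul_of_nonpos_left (by linarith) (by linarith)
      have g2' : PN * Real.log 2 ≤ PN * k6 := mul_le_mul_of_nonneg_left hk2 hPN.le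
      have g4 : (0:ℝ) ≤ |PD| * k6 := mul_nonneg (abs_nonneg PD) hk6
      rw [abs_of_pos hPN]
      linarith [h4, h1, h5, g2', g4]
  done

structure Tm where
  c : ℝ
  pa : ℝ
  pd : ℝ
  pn : ℝ

noncomputable def Tm.eval (n : ℕ) (δ : ℝ) (T : Tm) (l t : ℝ) : ℝ :=
  T.c * aFn n l t ^ T.pa * (aFn n l t - n / 2) ^ T.pd * (aFn n l t - n / 2 + δ * l) ^ T.pn

noncomputable def evalSum (n : ℕ) (δ : ℝ) (L : List Tm) (l t : ℝ) : ℝ :=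
  (L.map fun T => T.eval n δ l t).sum

@[simp] lemma evalSum_nil (n : ℕ) (δ l t : ℝ) : evalSum n δ [] l t = 0 := rfl

@[simp] lemma evalSum_cons (n : ℕ) (δ l t : ℝ) (T : Tm) (L : List Tm) :
    evalSum n δ (T :: L) l t = T.eval n δ l t + evalSum n δ L l t := by
  simp [evalSum]

lemma evalSum_append (n : ℕ) (δ l t : ℝ) (L M : List Tm) :
    evalSum n δ (L ++ M) l t = evalSum n δ L l t + evalSum n δ M l t := by
  simp [evalSum]

noncomputable def dT (T : Tm) : List Tm :=
  [⟨T.c * T.pa / 2, T.pa - 2, T.pd, T.pn⟩,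
   ⟨T.c * T.pd / 2, T.pa - 1, T.pd - 1, T.pn⟩,
   ⟨T.c * T.pn / 2, T.pa - 1, T.pd, T.pn - 1⟩]

noncomputable def dTlab (T : Tm) : List Tm :=
  [⟨T.c * T.pa, T.pa - 2, T.pd, T.pn⟩,
   ⟨T.c * T.pd, T.pa - 1, T.pd - 1, T.pn⟩]

noncomputable def dTlc (n : ℕ) (δ : ℝ) (T : Tm) : List Tm :=
  [⟨T.c * T.pn * δ, T.pa - 1, T.pd, T.pn⟩,
   ⟨T.c * T.pn * δ * (n / 2), T.pa - 1, T.pd, T.pn - 1⟩]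

theorem hasDerivAt_eval_t {n : ℕ} {δ : ℝ} (T : Tm) {l t : ℝ}
    (F : Facts n δ l t (aFn n l t)) :
    HasDerivAt (fun t' => T.eval n δ l t') (evalSum n δ (dT T) l t) t := by
  have ha : 0 < aFn n l t := F.ha
  have hDpos : 0 < aFn n l t - n / 2 := lt_of_le_of_lt (abs_nonneg l) F.hD
  have hNpos : 0 < aFn n l t - n / 2 + δ * l := F.hN
  have hS : (0:ℝ) < t + l ^ 2 + (n:ℝ) ^ 2 / 4 := by
    have := F.hsq; nlinarith [F.ha]
  have hSd : HasDerivAt (fun t' : ℝ => t' + l ^ 2 + (n:ℝ) ^ 2 / 4) 1 t := by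
    simpa using ((hasDerivAt_id t).add_const (l ^ 2)).add_const ((n:ℝ) ^ 2 / 4)
  have had : HasDerivAt (fun t' => aFn n l t') (1 / (2 * aFn n l t)) t := by
    have := hSd.sqrt (by positivity)
    simpa [aFn] using this
  have hDd : HasDerivAt (fun t' => aFn n l t' - (n:ℝ) / 2) (1 / (2 * aFn n l t)) t :=
    had.sub_const _
  have hNd : HasDerivAt (fun t' => aFn n l t' - (n:ℝ) / 2 + δ * l) (1 / (2 * aFn n l t)) t :=
    hDd.add_const _
  have h1 : HasDerivAt (fun t' => T.c * aFn n l t' ^ T.pa)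
      (T.c * (1 / (2 * aFn n l t) * T.pa * aFn n l t ^ (T.pa - 1))) t :=
    (had.rpow_const (Or.inl (ne_of_gt ha))).const_mul T.c
  have h2 : HasDerivAt (fun t' => (aFn n l t' - (n:ℝ) / 2) ^ T.pd)
      (1 / (2 * aFn n l t) * T.pd * (aFn n l t - (n:ℝ) / 2) ^ (T.pd - 1)) t :=
    hDd.rpow_const (Or.inl (ne_of_gt hDpos))
  have h3 : HasDerivAt (fun t' => (aFn n l t' - (n:ℝ) / 2 + δ * l) ^ T.pn)
      (1 / (2 * aFn n l t) * T.pn * (aFn n l t - (n:ℝ) / 2 + δ * l) ^ (T.pn - 1)) t :=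
    hNd.rpow_const (Or.inl (ne_of_gt hNpos))
  have hh := (h1.mul h2).mul h3
  simp only [Pi.mul_def] at hh
  refine hh.congr_deriv ?_
  simp only [dT, evalSum, List.map, List.sum_cons, List.sum_nil, Tm.eval]
  set a := aFn n l t
  set D := a - (n:ℝ) / 2
  set N := a - (n:ℝ) / 2 + δ * l
  have e1 : a ^ (T.pa - 1) = a ^ T.pa / a := by
    rw [Real.rpow_sub ha, Real.rpow_one]
  have e2 : a ^ (T.pa - 2) = a ^ T.pa / a / a := by
    rw [show T.pa - 2 = T.pa - 1 - 1 by ring, Real.rpow_sub ha, Real.rpow_one, e1]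
  have e3 : D ^ (T.pd - 1) = D ^ T.pd / D := by
    rw [Real.rpow_sub hDpos, Real.rpow_one]
  have e4 : N ^ (T.pn - 1) = N ^ T.pn / N := by
    rw [Real.rpow_sub hNpos, Real.rpow_one]
  simp only [dT, evalSum, List.map, List.sum_cons, List.sum_nil, Tm.eval, e1, e2, e3, e4]
  field_simp
  ring

set_option maxHeartbeats 2000000 in
theorem hasDerivAt_eval_l {n : ℕ} {δ : ℝ} (hδ : δ = 1 ∨ δ = -1) (T : Tm) {lam ξ : ℝ}
    (F : Facts n δ lam ξ (aFn n lam ξ)) :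
    HasDerivAt (fun l => T.eval n δ l ξ)
      (lam * evalSum n δ (dTlab T) lam ξ + evalSum n δ (dTlc n δ T) lam ξ) lam := by
  have ha : 0 < aFn n lam ξ := F.ha
  have hDpos : 0 < aFn n lam ξ - n / 2 := lt_of_le_of_lt (abs_nonneg lam) F.hD
  have hNpos : 0 < aFn n lam ξ - n / 2 + δ * lam := F.hN
  have hSd : HasDerivAt (fun l : ℝ => ξ + l ^ 2 + (n:ℝ) ^ 2 / 4) (2 * lam) lam := by
    have h0 : HasDerivAt (fun l : ℝ => l ^ 2) ((2:ℕ) * lam ^ (2 - 1)) lam := hasDerivAt_pow 2 lam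
    have := (h0.const_add ξ).add_const ((n:ℝ) ^ 2 / 4)
    simpa using this
  have had : HasDerivAt (fun l => aFn n l ξ) (2 * lam / (2 * aFn n lam ξ)) lam := by
    have := hSd.sqrt (by
      have := F.hsq; nlinarith [F.ha])
    simpa [aFn] using this
  have hDd : HasDerivAt (fun l => aFn n l ξ - (n:ℝ) / 2) (2 * lam / (2 * aFn n lam ξ)) lam :=
    had.sub_const _
  have hNd : HasDerivAt (fun l => aFn n l ξ - (n:ℝ) / 2 + δ * l)
      (2 * lam / (2 * aFn n lam ξ) + δ) lam := by
    have hl : HasDerivAt (fun l : ℝ => δ * l) δ lam := by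
      simpa using (hasDerivAt_id lam).const_mul δ
    exact hDd.add hl
  have h1 : HasDerivAt (fun l => T.c * aFn n l ξ ^ T.pa)
      (T.c * (2 * lam / (2 * aFn n lam ξ) * T.pa * aFn n lam ξ ^ (T.pa - 1))) lam :=
    (had.rpow_const (Or.inl (ne_of_gt ha))).const_mul T.c
  have h2 : HasDerivAt (fun l => (aFn n l ξ - (n:ℝ) / 2) ^ T.pd)
      (2 * lam / (2 * aFn n lam ξ) * T.pd * (aFn n lam ξ - (n:ℝ) / 2) ^ (T.pd - 1)) lam :=
    hDd.rpow_const (Or.inl (ne_of_gt hDpos))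
  have h3 : HasDerivAt (fun l => (aFn n l ξ - (n:ℝ) / 2 + δ * l) ^ T.pn)
      ((2 * lam / (2 * aFn n lam ξ) + δ) * T.pn *
        (aFn n lam ξ - (n:ℝ) / 2 + δ * lam) ^ (T.pn - 1)) lam :=
    hNd.rpow_const (Or.inl (ne_of_gt hNpos))
  have hh := (h1.mul h2).mul h3
  simp only [Pi.mul_def] at hh
  refine hh.congr_deriv ?_
  simp only [dTlab, dTlc, evalSum, List.map, List.sum_cons, List.sum_nil, Tm.eval]
  set a := aFn n lam ξ
  set D := a - (n:ℝ) / 2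
  set N := a - (n:ℝ) / 2 + δ * lam with hN_def
  have e1 : a ^ (T.pa - 1) = a ^ T.pa / a := by
    rw [Real.rpow_sub ha, Real.rpow_one]
  have e2 : a ^ (T.pa - 2) = a ^ T.pa / a / a := by
    rw [show T.pa - 2 = T.pa - 1 - 1 by ring, Real.rpow_sub ha, Real.rpow_one, e1]
  have e3 : D ^ (T.pd - 1) = D ^ T.pd / D := by
    rw [Real.rpow_sub hDpos, Real.rpow_one]
  have e4 : N ^ (T.pn - 1) = N ^ T.pn / N := by
    rw [Real.rpow_sub hNpos, Real.rpow_one]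
  simp only [dTlab, dTlc, evalSum, List.map, List.sum_cons, List.sum_nil, Tm.eval,
    e1, e2, e3, e4]
  have hδsq : δ * δ = 1 := by rcases hδ with rfl | rfl <;> norm_num
  have key : 2 * lam / (2 * a) + δ = δ * (N + (n:ℝ) / 2) / a := by
    rw [hN_def]
    field_simp
    linear_combination (-lam * 2) * hδsq
  rw [key]
  field_simp
  ring

theorem hasDerivAt_evalSum_t {n : ℕ} {δ : ℝ} (L : List Tm) {l t : ℝ}
    (F : Facts n δ l t (aFn n l t)) :
    HasDerivAt (fun t' => evalSum n δ L l t') (evalSum n δ (L.flatMap dT) l t) t := by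
  induction L with
  | nil => simpa [evalSum] using hasDerivAt_const t (0:ℝ)
  | cons T L ih =>
    have h := (hasDerivAt_eval_t T F).add ih
    have e : (fun t' => T.eval n δ l t' + evalSum n δ L l t')
        = fun t' => evalSum n δ (T :: L) l t' := by
      funext t'; simp [evalSum_cons]
    rw [show ((fun t' => T.eval n δ l t') + fun t' => evalSum n δ L l t') = fun t' => evalSum n δ (T :: L) l t' from e] at h
    have e2 : evalSum n δ ((T :: L).flatMap dT) l t
        = evalSum n δ (dT T) l t + evalSum n δ (L.flatMap dT) l t := by
      rw [List.flatMap_cons, evalSum_append]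
    rw [e2]
    exact h

def Good (j : ℕ) (T : Tm) : Prop :=
  T.pa ≤ -(j:ℝ) ∧ (1/2 : ℝ) - j ≤ T.pn ∧ T.pn ≤ 1/2 ∧ T.pd ≤ -(1/2:ℝ) ∧
    T.pa + T.pd + T.pn = -(2*(j:ℝ))

lemma good_dT {j : ℕ} {T : Tm} (hG : Good j T) : ∀ T' ∈ dT T, Good (j+1) T' := by
  obtain ⟨h1, h2, h3, h4, h5⟩ := hG
  intro T' hT'
  simp only [dT, List.mem_cons, List.mem_singleton, List.not_mem_nil, or_false] at hT'
  rcases hT' with rfl | rfl | rfl <;>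
    refine ⟨?_, ?_, ?_, ?_, ?_⟩ <;> simp only [] <;> push_cast <;> linarith

theorem rep {n : ℕ} (hn : 1 ≤ n) {δ : ℝ} (hδ : δ = 1 ∨ δ = -1) (j : ℕ) :
    ∃ L : List Tm, (∀ T ∈ L, Good j T) ∧
      ∀ l t : ℝ, l ≠ 0 → ((n : ℝ) + 1) * |l| < t →
        iteratedDeriv j (fun t' => nuMinus n δ l t') t = evalSum n δ L l t := by
  induction j with
  | zero =>
    refine ⟨[⟨1, 0, -(1/2 : ℝ), 1/2⟩], ?_, ?_⟩
    · intro T hT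
      simp only [List.mem_singleton] at hT
      subst hT
      refine ⟨?_, ?_, ?_, ?_, ?_⟩ <;> norm_num
    · intro l t hl hw
      have F := facts hn hδ hl hw
      have hDpos : 0 < aFn n l t - n / 2 := lt_of_le_of_lt (abs_nonneg l) F.hD
      have hNpos : 0 < aFn n l t - n / 2 + δ * l := F.hN
      rw [iteratedDeriv_zero]
      simp only [evalSum, List.map, List.sum_cons, List.sum_nil, Tm.eval, nuMinus]
      rw [Real.sqrt_eq_rpow, Real.div_rpow hNpos.le hDpos.le, Real.rpow_zero,
        Real.rpow_neg hDpos.le]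
      ring
  | succ j ih =>
    obtain ⟨L, hG, hE⟩ := ih
    refine ⟨L.flatMap dT, ?_, ?_⟩
    · intro T' hT'
      rw [List.mem_flatMap] at hT'
      obtain ⟨T, hT, hT'⟩ := hT'
      exact good_dT (hG T hT) T' hT'
    · intro l t hl hw
      have F := facts hn hδ hl hw
      rw [iteratedDeriv_succ]
      have hev : (fun t' => iteratedDeriv j (fun s => nuMinus n δ l s) t')
          =ᶠ[nhds t] fun t' => evalSum n δ L l t' := by
        filter_upwards [Ioi_mem_nhds hw] with t' ht'
        exact hE l t' hl ht'
      rw [hev.deriv_eq]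
      exact (hasDerivAt_evalSum_t L F).deriv

noncomputable def KI (n : ℕ) (T : Tm) : ℝ :=
  |T.c| * Real.exp ((|T.pd| + |T.pn|) * Real.log (6 * ((n:ℝ)+1)))

lemma KI_nonneg (n : ℕ) (T : Tm) : 0 ≤ KI n T := by
  unfold KI; positivity

noncomputable def CI (n : ℕ) (L : List Tm) : ℝ := (L.map (KI n)).sum

lemma CI_nonneg (n : ℕ) (L : List Tm) : 0 ≤ CI n L := by
  apply List.sum_nonneg
  intro x hx
  obtain ⟨T, _, rfl⟩ := List.mem_map.mp hx
  exact KI_nonneg n T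

lemma CI_cons (n : ℕ) (T : Tm) (L : List Tm) : CI n (T :: L) = KI n T + CI n L := by
  simp [CI]

lemma abs_eval {n : ℕ} {δ : ℝ} (T : Tm) {l t : ℝ} (F : Facts n δ l t (aFn n l t)) :
    |T.eval n δ l t| = |T.c| * (aFn n l t ^ T.pa * (aFn n l t - n / 2) ^ T.pd *
      (aFn n l t - n / 2 + δ * l) ^ T.pn) := by
  have ha : 0 < aFn n l t := F.ha
  have hDpos : 0 < aFn n l t - n / 2 := lt_of_le_of_lt (abs_nonneg l) F.hD
  have hNpos : 0 < aFn n l t - n / 2 + δ * l := F.hN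
  rw [Tm.eval, abs_mul, abs_mul, abs_mul,
    abs_of_pos (Real.rpow_pos_of_pos ha _),
    abs_of_pos (Real.rpow_pos_of_pos hDpos _),
    abs_of_pos (Real.rpow_pos_of_pos hNpos _)]
  ring

theorem eval_bound_I {n : ℕ} (hn : 1 ≤ n) {δ : ℝ} (hδ : δ = 1 ∨ δ = -1) {l t : ℝ}
    (hl : l ≠ 0) (hw : ((n : ℝ) + 1) * |l| < t) {j : ℕ} {T : Tm} (hG : Good j T) :
    |T.eval n δ l t| ≤ KI n T * t ^ (-(j:ℝ)) := by
  have F := facts hn hδ hl hw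
  obtain ⟨h1, h2, h3, h4, h5⟩ := hG
  have hj : (0:ℝ) ≤ (j:ℝ) := Nat.cast_nonneg j
  have key := ML hn F.ht F.ha F.hna F.hD F.hN F.hD2 F.hN2 F.hN3 F.hta T.pa T.pd T.pn
    (by linarith) (by linarith) (by linarith)
  rw [show (T.pa + T.pd + T.pn) / 2 = -(j:ℝ) by linarith] at key
  calc |T.eval n δ l t|
      = |T.c| * (aFn n l t ^ T.pa * (aFn n l t - n / 2) ^ T.pd *
          (aFn n l t - n / 2 + δ * l) ^ T.pn) := abs_eval T F
    _ ≤ |T.c| * (Real.exp ((|T.pd| + |T.pn|) * Real.log (6 * ((n:ℝ)+1))) * t ^ (-(j:ℝ))) :=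
        mul_le_mul_of_nonneg_left key (abs_nonneg _)
    _ = KI n T * t ^ (-(j:ℝ)) := by rw [KI]; ring

theorem evalSum_bound_I {n : ℕ} (hn : 1 ≤ n) {δ : ℝ} (hδ : δ = 1 ∨ δ = -1) {l t : ℝ}
    (hl : l ≠ 0) (hw : ((n : ℝ) + 1) * |l| < t) {j : ℕ} {L : List Tm}
    (hGL : ∀ T ∈ L, Good j T) :
    |evalSum n δ L l t| ≤ CI n L * t ^ (-(j:ℝ)) := by
  induction L with
  | nil => simp [CI, evalSum]
  | cons T L ih =>
    have hT := hGL T List.mem_cons_self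
    have hL : ∀ T' ∈ L, Good j T' := fun T' h => hGL T' (List.mem_cons_of_mem T h)
    calc |evalSum n δ (T :: L) l t| ≤ |T.eval n δ l t| + |evalSum n δ L l t| := by
          rw [evalSum_cons]; exact abs_add_le _ _
    _ ≤ KI n T * t ^ (-(j:ℝ)) + CI n L * t ^ (-(j:ℝ)) :=
          add_le_add (eval_bound_I hn hδ hl hw hT) (ih hL)
    _ = CI n (T :: L) * t ^ (-(j:ℝ)) := by rw [CI_cons]; ring

noncomputable def KL (n : ℕ) (T : Tm) : ℝ :=
  Real.exp ((|T.pd| + |T.pn| + 1) * Real.log (6 * ((n:ℝ)+1)))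

noncomputable def M (n : ℕ) (T : Tm) : ℝ :=
  |T.c| * (|T.pa| + |T.pd| + |T.pn| + |T.pn| * (n/2)) * KL n T

lemma M_nonneg (n : ℕ) (T : Tm) : 0 ≤ M n T := by
  unfold M KL; positivity

set_option maxHeartbeats 2000000 in
theorem derivTerm_bound {n : ℕ} (hn : 1 ≤ n) {δ : ℝ} (hδ : δ = 1 ∨ δ = -1) {lam ξ : ℝ}
    (hl : lam ≠ 0) (hw : ((n : ℝ) + 1) * |lam| < ξ) {j : ℕ} {T : Tm} (hG : Good j T) :
    |lam * evalSum n δ (dTlab T) lam ξ + evalSum n δ (dTlc n δ T) lam ξ| ≤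
      M n T * |lam|⁻¹ * ξ ^ (-(j:ℝ)) := by
  have F := facts hn hδ hl hw
  obtain ⟨h1, h2, h3, h4, h5⟩ := hG
  have hj : (0:ℝ) ≤ (j:ℝ) := Nat.cast_nonneg j
  have ha : 0 < aFn n lam ξ := F.ha
  have hDpos : 0 < aFn n lam ξ - n / 2 := lt_of_le_of_lt (abs_nonneg lam) F.hD
  have hNpos : 0 < aFn n lam ξ - n / 2 + δ * lam := F.hN
  set a := aFn n lam ξ with ha_def
  set D := a - (n:ℝ) / 2 with hD_def
  set N := a - (n:ℝ) / 2 + δ * lam with hN_def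
  have habs : 0 < |lam| := abs_pos.mpr hl
  have hDa : D ≤ a := by rw [hD_def]; have : (0:ℝ) ≤ (n:ℝ) := Nat.cast_nonneg n; linarith
  have hlD : |lam| ≤ D := F.hD.le
  have hl2 : lam ^ 2 ≤ a * D := by nlinarith [sq_abs lam, abs_nonneg lam]
  have hlxi : |lam| ≤ ξ := by
    nlinarith [abs_nonneg lam, (show (0:ℝ) ≤ (n:ℝ) from Nat.cast_nonneg n)]
  have hxipos : (0:ℝ) < ξ := F.ht
  have hL6 : (0:ℝ) ≤ Real.log (6 * ((n:ℝ)+1)) := Real.log_nonneg (by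
    have : (0:ℝ) ≤ (n:ℝ) := Nat.cast_nonneg n; linarith)
  -- positivity of building blocks
  have hX1 : 0 < a ^ (T.pa - 2) * D ^ T.pd * N ^ T.pn := by positivity
  have hX2 : 0 < a ^ (T.pa - 1) * D ^ (T.pd - 1) * N ^ T.pn := by positivity
  have hX3 : 0 < a ^ (T.pa - 1) * D ^ T.pd * N ^ T.pn := by positivity
  have hX4 : 0 < a ^ (T.pa - 1) * D ^ T.pd * N ^ (T.pn - 1) := by positivity
  have hKLle : ∀ g : ℝ, g ≤ |T.pd| + |T.pn| + 1 →
      Real.exp (g * Real.log (6 * ((n:ℝ)+1))) ≤ KL n T := by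
    intro g hg
    rw [KL]
    exact Real.exp_le_exp.mpr (mul_le_mul_of_nonneg_right hg hL6)
  -- branch A
  have mlA := ML hn F.ht F.ha F.hna F.hD F.hN F.hD2 F.hN2 F.hN3 F.hta
    (T.pa - 1) (T.pd + 1) T.pn (by linarith) (by linarith) (by linarith)
  rw [show (T.pa - 1 + (T.pd + 1) + T.pn) / 2 = -(j:ℝ) by linarith] at mlA
  have mlA' : a ^ (T.pa - 1) * D ^ (T.pd + 1) * N ^ T.pn ≤ KL n T * ξ ^ (-(j:ℝ)) := by
    refine le_trans mlA (mul_le_mul_of_nonneg_right (hKLle _ ?_) (Real.rpow_pos_of_pos hxipos _).le)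
    have := abs_add_le T.pd 1
    simp only [abs_one] at this
    linarith [this]
  have eqA : (a * D) * (a ^ (T.pa - 2) * D ^ T.pd * N ^ T.pn)
      = a ^ (T.pa - 1) * D ^ (T.pd + 1) * N ^ T.pn := by
    rw [Real.rpow_sub ha T.pa 1, Real.rpow_sub ha T.pa 2, Real.rpow_add hDpos T.pd 1,
      Real.rpow_one, Real.rpow_one, show (2:ℝ) = 1 + 1 by norm_num,
      Real.rpow_add ha 1 1, Real.rpow_one]
    field_simp
  have hA : lam ^ 2 * (a ^ (T.pa - 2) * D ^ T.pd * N ^ T.pn) ≤ KL n T * ξ ^ (-(j:ℝ)) := by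
    calc lam ^ 2 * (a ^ (T.pa - 2) * D ^ T.pd * N ^ T.pn)
        ≤ (a * D) * (a ^ (T.pa - 2) * D ^ T.pd * N ^ T.pn) :=
          mul_le_mul_of_nonneg_right hl2 hX1.le
      _ = a ^ (T.pa - 1) * D ^ (T.pd + 1) * N ^ T.pn := eqA
      _ ≤ KL n T * ξ ^ (-(j:ℝ)) := mlA'
  -- branch B
  have mlB := ML hn F.ht F.ha F.hna F.hD F.hN F.hD2 F.hN2 F.hN3 F.hta
    T.pa T.pd T.pn (by linarith) (by linarith) (by linarith)
  rw [show (T.pa + T.pd + T.pn) / 2 = -(j:ℝ) by linarith] at mlB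
  have mlB' : a ^ T.pa * D ^ T.pd * N ^ T.pn ≤ KL n T * ξ ^ (-(j:ℝ)) := by
    refine le_trans mlB (mul_le_mul_of_nonneg_right (hKLle _ ?_) (Real.rpow_pos_of_pos hxipos _).le)
    linarith
  have eqB : (a * D) * (a ^ (T.pa - 1) * D ^ (T.pd - 1) * N ^ T.pn)
      = a ^ T.pa * D ^ T.pd * N ^ T.pn := by
    rw [Real.rpow_sub ha T.pa 1, Real.rpow_sub hDpos T.pd 1, Real.rpow_one, Real.rpow_one]
    field_simp
  have hB : lam ^ 2 * (a ^ (T.pa - 1) * D ^ (T.pd - 1) * N ^ T.pn) ≤ KL n T * ξ ^ (-(j:ℝ)) := by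
    calc lam ^ 2 * (a ^ (T.pa - 1) * D ^ (T.pd - 1) * N ^ T.pn)
        ≤ (a * D) * (a ^ (T.pa - 1) * D ^ (T.pd - 1) * N ^ T.pn) :=
          mul_le_mul_of_nonneg_right hl2 hX2.le
      _ = a ^ T.pa * D ^ T.pd * N ^ T.pn := eqB
      _ ≤ KL n T * ξ ^ (-(j:ℝ)) := mlB'
  -- branch C1
  have eqC : D * (a ^ (T.pa - 1) * D ^ T.pd * N ^ T.pn)
      = a ^ (T.pa - 1) * D ^ (T.pd + 1) * N ^ T.pn := by
    rw [Real.rpow_add hDpos T.pd 1, Real.rpow_one]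
    ring
  have hC1 : |lam| * (a ^ (T.pa - 1) * D ^ T.pd * N ^ T.pn) ≤ KL n T * ξ ^ (-(j:ℝ)) := by
    calc |lam| * (a ^ (T.pa - 1) * D ^ T.pd * N ^ T.pn)
        ≤ D * (a ^ (T.pa - 1) * D ^ T.pd * N ^ T.pn) :=
          mul_le_mul_of_nonneg_right hlD hX3.le
      _ = a ^ (T.pa - 1) * D ^ (T.pd + 1) * N ^ T.pn := eqC
      _ ≤ KL n T * ξ ^ (-(j:ℝ)) := mlA'
  -- branch C2
  have mlC := ML hn F.ht F.ha F.hna F.hD F.hN F.hD2 F.hN2 F.hN3 F.hta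
    (T.pa - 1) T.pd (T.pn - 1) (by linarith) (by linarith) (by linarith)
  rw [show (T.pa - 1 + T.pd + (T.pn - 1)) / 2 = -(j:ℝ) - 1 by linarith] at mlC
  have mlC' : a ^ (T.pa - 1) * D ^ T.pd * N ^ (T.pn - 1) ≤ KL n T * ξ ^ (-(j:ℝ) - 1) := by
    refine le_trans mlC (mul_le_mul_of_nonneg_right (hKLle _ ?_) (Real.rpow_pos_of_pos hxipos _).le)
    have htri : |T.pn - 1| ≤ |T.pn| + 1 := by
      have h := abs_add_le T.pn (-1)
      rw [← sub_eq_add_neg] at h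
      simpa using h
    linarith
  have hC2 : |lam| * (a ^ (T.pa - 1) * D ^ T.pd * N ^ (T.pn - 1)) ≤ KL n T * ξ ^ (-(j:ℝ)) := by
    calc |lam| * (a ^ (T.pa - 1) * D ^ T.pd * N ^ (T.pn - 1))
        ≤ ξ * (a ^ (T.pa - 1) * D ^ T.pd * N ^ (T.pn - 1)) :=
          mul_le_mul_of_nonneg_right hlxi hX4.le
      _ ≤ ξ * (KL n T * ξ ^ (-(j:ℝ) - 1)) := mul_le_mul_of_nonneg_left mlC' hxipos.le
      _ = KL n T * (ξ ^ (1:ℝ) * ξ ^ (-(j:ℝ) - 1)) := by rw [Real.rpow_one]; ring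
      _ = KL n T * ξ ^ (-(j:ℝ)) := by rw [← Real.rpow_add hxipos]; norm_num
  -- assemble
  have hδabs : |δ| = 1 := by rcases hδ with rfl | rfl <;> norm_num
  set X1 := a ^ (T.pa - 2) * D ^ T.pd * N ^ T.pn with hX1_def
  set X2 := a ^ (T.pa - 1) * D ^ (T.pd - 1) * N ^ T.pn with hX2_def
  set X3 := a ^ (T.pa - 1) * D ^ T.pd * N ^ T.pn with hX3_def
  set X4 := a ^ (T.pa - 1) * D ^ T.pd * N ^ (T.pn - 1) with hX4_def
  rw [mul_comm (M n T) |lam|⁻¹, mul_assoc, ← div_eq_inv_mul, le_div_iff₀ habs]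
  set tA := Tm.eval n δ ⟨T.c * T.pa, T.pa - 2, T.pd, T.pn⟩ lam ξ with htA
  set tB := Tm.eval n δ ⟨T.c * T.pd, T.pa - 1, T.pd - 1, T.pn⟩ lam ξ with htB
  set tC := Tm.eval n δ ⟨T.c * T.pn * δ, T.pa - 1, T.pd, T.pn⟩ lam ξ with htC
  set tD := Tm.eval n δ ⟨T.c * T.pn * δ * ((n:ℝ)/2), T.pa - 1, T.pd, T.pn - 1⟩ lam ξ with htD
  have e1 : |tA| = |T.c| * |T.pa| * X1 := by
    rw [htA, abs_eval _ F]; rw [abs_mul]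
  have e2 : |tB| = |T.c| * |T.pd| * X2 := by
    rw [htB, abs_eval _ F]; rw [abs_mul]
  have e3 : |tC| = |T.c| * |T.pn| * X3 := by
    rw [htC, abs_eval _ F]; rw [abs_mul, abs_mul, hδabs, mul_one]
  have e4 : |tD| = |T.c| * |T.pn| * ((n:ℝ)/2) * X4 := by
    rw [htD, abs_eval _ F]
    rw [abs_mul, abs_mul, abs_mul, hδabs, mul_one,
      abs_of_nonneg (show (0:ℝ) ≤ (n:ℝ)/2 by positivity)]
  have hES : evalSum n δ (dTlab T) lam ξ = tA + tB ∧
      evalSum n δ (dTlc n δ T) lam ξ = tC + tD := by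
    constructor <;> simp [dTlab, dTlc, evalSum_cons, htA, htB, htC, htD]
  rw [hES.1, hES.2]
  have step : |lam * (tA + tB) + (tC + tD)| ≤ |lam| * (|tA| + |tB|) + (|tC| + |tD|) := by
    calc |lam * (tA + tB) + (tC + tD)| ≤ |lam * (tA + tB)| + |tC + tD| := abs_add_le _ _
      _ ≤ |lam| * (|tA| + |tB|) + (|tC| + |tD|) := by
          rw [abs_mul]
          have t1 := abs_add_le tA tB
          have t2 := abs_add_le tC tD
          have := mul_le_mul_of_nonneg_left t1 (abs_nonneg lam)
          linarith
  refine le_trans (mul_le_mul_of_nonneg_right step habs.le) ?_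
  rw [e1, e2, e3, e4]
  clear_value tA tB tC tD
  clear e1 e2 e3 e4 hES step htA htB htC htD
  have hsq : |lam| * |lam| = lam ^ 2 := by rw [← sq_abs lam]; ring
  have b1 := mul_le_mul_of_nonneg_left hA (by positivity : (0:ℝ) ≤ |T.c| * |T.pa|)
  have b2 := mul_le_mul_of_nonneg_left hB (by positivity : (0:ℝ) ≤ |T.c| * |T.pd|)
  have b3 := mul_le_mul_of_nonneg_left hC1 (by positivity : (0:ℝ) ≤ |T.c| * |T.pn|)
  have b4 := mul_le_mul_of_nonneg_left hC2 (by positivity : (0:ℝ) ≤ |T.c| * |T.pn| * ((n:ℝ)/2))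
  have expand : (|lam| * (|T.c| * |T.pa| * X1 + |T.c| * |T.pd| * X2) +
      (|T.c| * |T.pn| * X3 + |T.c| * |T.pn| * ((n:ℝ)/2) * X4)) * |lam| =
      |T.c| * |T.pa| * (lam ^ 2 * X1) + |T.c| * |T.pd| * (lam ^ 2 * X2) +
      (|T.c| * |T.pn| * (|lam| * X3) + |T.c| * |T.pn| * ((n:ℝ)/2) * (|lam| * X4)) := by
    linear_combination (|T.c| * |T.pa| * X1 + |T.c| * |T.pd| * X2) * hsq
  rw [expand, M]
  clear_value X1 X2 X3 X4
  linarith [b1, b2, b3, b4]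

noncomputable def derivL (n : ℕ) (δ : ℝ) (L : List Tm) (lam ξ : ℝ) : ℝ :=
  (L.map fun T => lam * evalSum n δ (dTlab T) lam ξ + evalSum n δ (dTlc n δ T) lam ξ).sum

theorem hasDerivAt_evalSum_l {n : ℕ} {δ : ℝ} (hδ : δ = 1 ∨ δ = -1) (L : List Tm) {lam ξ : ℝ}
    (F : Facts n δ lam ξ (aFn n lam ξ)) :
    HasDerivAt (fun l => evalSum n δ L l ξ) (derivL n δ L lam ξ) lam := by
  induction L with
  | nil => simpa [evalSum, derivL] using hasDerivAt_const lam (0:ℝ)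
  | cons T L ih =>
    have h := (hasDerivAt_eval_l hδ T F).add ih
    have e : (fun l => T.eval n δ l ξ + evalSum n δ L l ξ)
        = fun l => evalSum n δ (T :: L) l ξ := by
      funext l; simp [evalSum_cons]
    rw [show ((fun l => T.eval n δ l ξ) + fun l => evalSum n δ L l ξ) = fun l => evalSum n δ (T :: L) l ξ from e] at h
    have e2 : derivL n δ (T :: L) lam ξ =
        (lam * evalSum n δ (dTlab T) lam ξ + evalSum n δ (dTlc n δ T) lam ξ) +
          derivL n δ L lam ξ := by
      simp [derivL]
    rw [e2]
    exact h

noncomputable def CM (n : ℕ) (L : List Tm) : ℝ := (L.map (M n)).sum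

lemma CM_nonneg (n : ℕ) (L : List Tm) : 0 ≤ CM n L := by
  apply List.sum_nonneg
  intro x hx
  obtain ⟨T, _, rfl⟩ := List.mem_map.mp hx
  exact M_nonneg n T

theorem derivL_bound {n : ℕ} (hn : 1 ≤ n) {δ : ℝ} (hδ : δ = 1 ∨ δ = -1) {lam ξ : ℝ}
    (hl : lam ≠ 0) (hw : ((n : ℝ) + 1) * |lam| < ξ) {j : ℕ} {L : List Tm}
    (hGL : ∀ T ∈ L, Good j T) :
    |derivL n δ L lam ξ| ≤ CM n L * |lam|⁻¹ * ξ ^ (-(j:ℝ)) := by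
  induction L with
  | nil => simp [CM, derivL]
  | cons T L ih =>
    have hT := hGL T List.mem_cons_self
    have hL : ∀ T' ∈ L, Good j T' := fun T' h => hGL T' (List.mem_cons_of_mem T h)
    have e2 : derivL n δ (T :: L) lam ξ =
        (lam * evalSum n δ (dTlab T) lam ξ + evalSum n δ (dTlc n δ T) lam ξ) +
          derivL n δ L lam ξ := by
      simp [derivL]
    have eCM : CM n (T :: L) = M n T + CM n L := by simp [CM]
    calc |derivL n δ (T :: L) lam ξ|
        ≤ |lam * evalSum n δ (dTlab T) lam ξ + evalSum n δ (dTlc n δ T) lam ξ| +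
          |derivL n δ L lam ξ| := by rw [e2]; exact abs_add_le _ _
      _ ≤ M n T * |lam|⁻¹ * ξ ^ (-(j:ℝ)) + CM n L * |lam|⁻¹ * ξ ^ (-(j:ℝ)) :=
          add_le_add (derivTerm_bound hn hδ hl hw hT) (ih hL)
      _ = CM n (T :: L) * |lam|⁻¹ * ξ ^ (-(j:ℝ)) := by rw [eCM]; ring

end Stmt12

/-- estimate (6.8) for `ν₋` in the proof of Proposition 6.7: for
every `j ≥ 0` and `i ∈ {0,1}` there is `C > 0` with
`|∂_λ^i ∂_ξ^j ν₋(λ,ξ)| ≤ C·|λ|^{−i}·ξ^{−j}` on `Ω = {λ ≠ 0, ξ > (n+1)|λ|}`. -/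
theorem stmt_12 (n : ℕ) (hn : 1 ≤ n) (δ : ℝ) (hδ : δ = 1 ∨ δ = -1)
    (j : ℕ) (i : ℕ) (hi : i ≤ 1) :
    ∃ C : ℝ, 0 < C ∧ ∀ lam ξ : ℝ, lam ≠ 0 → ((n : ℝ) + 1) * |lam| < ξ →
      |mixedPartial i j (nuMinus n δ) lam ξ| ≤ C * |lam| ^ (-(i : ℤ)) * ξ ^ (-(j : ℤ)) := by
  obtain ⟨L, hG, hE⟩ := Stmt12.rep hn hδ j
  interval_cases i
  · refine ⟨Stmt12.CI n L + 1, by linarith [Stmt12.CI_nonneg n L], fun lam ξ hl hw => ?_⟩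
    have hxipos : (0:ℝ) < ξ := (Stmt12.facts hn hδ hl hw).ht
    have heq : mixedPartial 0 j (nuMinus n δ) lam ξ = Stmt12.evalSum n δ L lam ξ := by
      rw [mixedPartial, iteratedDeriv_zero]
      exact hE lam ξ hl hw
    rw [heq]
    have hb := Stmt12.evalSum_bound_I hn hδ hl hw hG
    have hzpow : ξ ^ (-(j:ℤ)) = ξ ^ (-(j:ℝ)) := by
      rw [← Real.rpow_intCast ξ (-(j:ℤ))]
      push_cast
      ring_nf
    have hone : |lam| ^ (-((0:ℕ):ℤ)) = (1:ℝ) := by norm_num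
    rw [hone, hzpow, mul_one]
    have : (0:ℝ) < ξ ^ (-(j:ℝ)) := Real.rpow_pos_of_pos hxipos _
    nlinarith [hb]
  · refine ⟨Stmt12.CM n L + 1, by linarith [Stmt12.CM_nonneg n L], fun lam ξ hl hw => ?_⟩
    have F := Stmt12.facts hn hδ hl hw
    have hxipos : (0:ℝ) < ξ := F.ht
    have habs : 0 < |lam| := abs_pos.mpr hl
    have heq : mixedPartial 1 j (nuMinus n δ) lam ξ = Stmt12.derivL n δ L lam ξ := by
      rw [mixedPartial, iteratedDeriv_one]
      have hU : IsOpen {l : ℝ | l ≠ 0 ∧ ((n:ℝ)+1)*|l| < ξ} := by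
        apply IsOpen.inter
        · exact isOpen_ne
        · have hc : Continuous fun l : ℝ => ((n:ℝ)+1)*|l| :=
            continuous_const.mul continuous_abs
          exact isOpen_lt hc continuous_const
      have hmem : {l : ℝ | l ≠ 0 ∧ ((n:ℝ)+1)*|l| < ξ} ∈ nhds lam := hU.mem_nhds ⟨hl, hw⟩
      have hev : (fun l => iteratedDeriv j (fun t => nuMinus n δ l t) ξ)
          =ᶠ[nhds lam] fun l => Stmt12.evalSum n δ L l ξ := by
        filter_upwards [hmem] with l hl'
        exact hE l ξ hl'.1 hl'.2
      rw [hev.deriv_eq]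
      exact (Stmt12.hasDerivAt_evalSum_l hδ L F).deriv
    rw [heq]
    have hb := Stmt12.derivL_bound hn hδ hl hw hG
    have hzpow : ξ ^ (-(j:ℤ)) = ξ ^ (-(j:ℝ)) := by
      rw [← Real.rpow_intCast ξ (-(j:ℤ))]
      push_cast
      ring_nf
    have hone : |lam| ^ (-((1:ℕ):ℤ)) = |lam|⁻¹ := by
      norm_num
    rw [hone, hzpow]
    have hx : (0:ℝ) < ξ ^ (-(j:ℝ)) := Real.rpow_pos_of_pos hxipos _
    have hinv : (0:ℝ) < |lam|⁻¹ := by positivity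
    nlinarith [hb]
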